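/- Let Φ(x) = (2π)^{−1/2} ∫_{−∞}^x e^{−t²/2} dt and φ(x) = (2π)^{−1/2} e^{−x²/2}. Then for every x ∈ [−3, 0), φ(x)/Φ(x) ≤ 3.284. -/

import Mathlib

/-!
On `[-c, ∞)` the function `c Φ - φ` is nondecreasing, since its derivative is `(c + x) φ(x) ≥ 0`;
so with `c = 3.284` it suffices to check `φ(-3) ≤ c Φ(-3)`. This endpoint is tight
(`φ(-3)/Φ(-3) ≈ 3.2831`) and is settled without numerics: for a suitable convergent `p/q` of
Laplace's continued fraction for the Mills ratio, `F(x) = -φ(x) p(x)/q(x)` has derivative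
`φ(x) (1 - 720/q(x)²) ≤ φ(x)` and vanishes at `-∞`, so `F ≤ Φ`, and `F(-3) = (720/2364) φ(-3)`.
-/

namespace Stmt12

/-- The standard normal cumulative distribution function
`Φ(x) = (2π)^{-1/2} ∫_{-∞}^x e^{-t²/2} dt`. -/
noncomputable def Phi (x : ℝ) : ℝ :=
  (2 * Real.pi) ^ (-(1 / 2) : ℝ) * ∫ t in Set.Iic x, Real.exp (-t ^ 2 / 2)

/-- The standard normal density `φ(x) = (2π)^{-1/2} e^{-x²/2}`. -/
noncomputable def phi (x : ℝ) : ℝ :=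
  (2 * Real.pi) ^ (-(1 / 2) : ℝ) * Real.exp (-x ^ 2 / 2)

open Set Filter Topology MeasureTheory

lemma phi_pos (x : ℝ) : 0 < phi x := by
  unfold phi; positivity

lemma continuous_phi : Continuous phi := by
  unfold phi; fun_prop

lemma hasDerivAt_phi (x : ℝ) : HasDerivAt phi (-x * phi x) x := by
  have h : HasDerivAt (fun y : ℝ => -y ^ 2 / 2) (-x) x :=
    ((hasDerivAt_pow 2 x).neg.div_const 2).congr_deriv (by push_cast; ring)
  exact ((h.exp).const_mul _).congr_deriv (by unfold phi; ring)

lemma tendsto_phi_atBot : Tendsto phi atBot (𝓝 0) := by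
  have hexponent : Tendsto (fun t : ℝ => -t ^ 2 / 2) atBot atBot := by
    have hsq : Tendsto (fun t : ℝ => t ^ 2) atBot atTop := by
      simpa [Function.comp_def] using
        (tendsto_pow_atTop (α := ℝ) two_ne_zero).comp tendsto_neg_atBot_atTop
    exact (tendsto_neg_atTop_atBot.comp hsq).atBot_div_const two_pos
  have := (Real.tendsto_exp_atBot.comp hexponent).const_mul ((2 * Real.pi) ^ (-(1 / 2) : ℝ))
  rwa [mul_zero] at this

lemma integrable_phi : Integrable phi := by
  have h := (integrable_exp_neg_mul_sq (by norm_num : (0 : ℝ) < 1 / 2)).const_mul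
    ((2 * Real.pi) ^ (-(1 / 2) : ℝ))
  convert h using 3 with t
  unfold phi; ring_nf

lemma Phi_eq_integral_phi (x : ℝ) : Phi x = ∫ t in Iic x, phi t := by
  simp only [Phi, phi, integral_const_mul]

lemma Phi_pos (x : ℝ) : 0 < Phi x := by
  rw [Phi_eq_integral_phi, integral_pos_iff_support_of_nonneg (fun t => (phi_pos t).le)
    integrable_phi.integrableOn]
  simp [Function.support, (phi_pos _).ne']

lemma Phi_sub_Phi (a b : ℝ) : Phi b - Phi a = ∫ t in a..b, phi t := by
  rw [Phi_eq_integral_phi, Phi_eq_integral_phi]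
  exact intervalIntegral.integral_Iic_sub_Iic integrable_phi.integrableOn
    integrable_phi.integrableOn

lemma phi_sub_phi (a b : ℝ) : phi b - phi a = ∫ t in a..b, -t * phi t :=
  (intervalIntegral.integral_eq_sub_of_hasDerivAt (fun t _ => hasDerivAt_phi t)
    ((continuous_neg.mul continuous_phi).intervalIntegrable a b)).symm

lemma phi_sub_le_mul_Phi_sub {a b c : ℝ} (hca : -c ≤ a) (hab : a ≤ b) :
    phi b - phi a ≤ c * (Phi b - Phi a) := by
  rw [phi_sub_phi, Phi_sub_Phi, ← intervalIntegral.integral_const_mul]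
  refine intervalIntegral.integral_mono_on hab ?_ ?_ fun t ht => ?_
  · exact (continuous_neg.mul continuous_phi).intervalIntegrable a b
  · exact (continuous_phi.const_mul c).intervalIntegrable a b
  · exact mul_le_mul_of_nonneg_right (by linarith [ht.1]) (phi_pos t).le

lemma le_Phi_of_hasDerivAt_le_phi {F F' : ℝ → ℝ} {x : ℝ}
    (hF : ∀ t ∈ Iic x, HasDerivAt F (F' t) t) (hF'int : IntegrableOn F' (Iic x))
    (hF'le : ∀ t ∈ Iic x, F' t ≤ phi t) (hF0 : Tendsto F atBot (𝓝 0)) : F x ≤ Phi x := by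
  rw [← sub_zero (F x), ← integral_Iic_of_hasDerivAt_of_tendsto' hF hF'int hF0,
    Phi_eq_integral_phi]
  exact setIntegral_mono_on hF'int integrable_phi.integrableOn measurableSet_Iic hF'le

/-- `millsNum x / millsDen x = 1/(x+1/(x+2/(x+3/(x+4/(x+5/x)))))`, a convergent of Laplace's
continued fraction for the Mills ratio `(1 - Φ(x))/φ(x)`. -/
def millsNum (x : ℝ) : ℝ := x ^ 5 + 14 * x ^ 3 + 33 * x

def millsDen (x : ℝ) : ℝ := x ^ 6 + 15 * x ^ 4 + 45 * x ^ 2 + 15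

lemma fifteen_le_millsDen (x : ℝ) : 15 ≤ millsDen x := by
  unfold millsDen; nlinarith [pow_two_nonneg x, pow_two_nonneg (x ^ 2), pow_two_nonneg (x ^ 3)]

lemma millsDen_pos (x : ℝ) : 0 < millsDen x := by
  linarith [fifteen_le_millsDen x]

lemma continuous_millsDen : Continuous millsDen := by
  unfold millsDen; fun_prop

lemma abs_millsNum_le_millsDen (x : ℝ) : |millsNum x| ≤ millsDen x := by
  unfold millsNum millsDen
  rw [abs_le]
  constructor
  · nlinarith [sq_nonneg (x ^ 3 + x ^ 2 / 2), sq_nonneg (x ^ 2 + x / 2), sq_nonneg (x + 2 / 5)]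
  · nlinarith [sq_nonneg (x ^ 3 - x ^ 2 / 2), sq_nonneg (x ^ 2 - x / 2), sq_nonneg (x - 2 / 5)]

lemma hasDerivAt_millsNum (x : ℝ) : HasDerivAt millsNum (5 * x ^ 4 + 42 * x ^ 2 + 33) x :=
  (((hasDerivAt_pow 5 x).add ((hasDerivAt_pow 3 x).const_mul 14)).add
    ((hasDerivAt_id x).const_mul 33)).congr_deriv (by push_cast; ring)

lemma hasDerivAt_millsDen (x : ℝ) : HasDerivAt millsDen (6 * x ^ 5 + 60 * x ^ 3 + 90 * x) x :=
  ((((hasDerivAt_pow 6 x).add ((hasDerivAt_pow 4 x).const_mul 15)).add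
    ((hasDerivAt_pow 2 x).const_mul 45)).add_const 15).congr_deriv (by push_cast; ring)

lemma hasDerivAt_neg_phi_mul_millsNum_div_millsDen (x : ℝ) :
    HasDerivAt (fun t => -phi t * millsNum t / millsDen t)
      (phi x * (1 - 720 / millsDen x ^ 2)) x := by
  have hden := (millsDen_pos x).ne'
  refine (((hasDerivAt_phi x).neg.mul (hasDerivAt_millsNum x)).div (hasDerivAt_millsDen x)
    hden).congr_deriv ?_
  simp only [Pi.neg_apply, Pi.mul_apply]
  field_simp
  unfold millsNum millsDen
  ring

lemma tendsto_neg_phi_mul_millsNum_div_millsDen_atBot :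
    Tendsto (fun t => -phi t * millsNum t / millsDen t) atBot (𝓝 0) := by
  refine squeeze_zero_norm (fun t => ?_) tendsto_phi_atBot
  rw [norm_div, norm_mul, norm_neg, Real.norm_eq_abs, Real.norm_eq_abs, Real.norm_eq_abs,
    abs_of_pos (phi_pos t), abs_of_pos (millsDen_pos t), mul_div_assoc]
  exact mul_le_of_le_one_right (phi_pos t).le
    ((div_le_one (millsDen_pos t)).2 (abs_millsNum_le_millsDen t))

lemma integrable_phi_mul_one_sub_div_millsDen_sq :
    Integrable (fun t => phi t * (1 - 720 / millsDen t ^ 2)) := by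
  refine integrable_phi.mul_bdd (c := 3) ?_ (Eventually.of_forall fun t => ?_)
  · exact (continuous_const.sub (continuous_const.div (continuous_millsDen.pow 2)
      fun t => pow_ne_zero 2 (millsDen_pos t).ne')).aestronglyMeasurable
  · have h15 := fifteen_le_millsDen t
    have hle : 720 / millsDen t ^ 2 ≤ 16 / 5 := by
      rw [div_le_iff₀ (by positivity)]; nlinarith
    have hnonneg : 0 ≤ 720 / millsDen t ^ 2 := by positivity
    rw [Real.norm_eq_abs, abs_le]
    constructor <;> linarith

lemma neg_phi_mul_millsNum_div_millsDen_le_Phi (x : ℝ) :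
    -phi x * millsNum x / millsDen x ≤ Phi x :=
  le_Phi_of_hasDerivAt_le_phi (fun t _ => hasDerivAt_neg_phi_mul_millsNum_div_millsDen t)
    integrable_phi_mul_one_sub_div_millsDen_sq.integrableOn
    (fun t _ => mul_le_of_le_one_right (phi_pos t).le (sub_le_self _ (by positivity)))
    tendsto_neg_phi_mul_millsNum_div_millsDen_atBot

lemma phi_neg_three_le_mul_Phi : phi (-3) ≤ 3.284 * Phi (-3) := by
  have h := neg_phi_mul_millsNum_div_millsDen_le_Phi (-3)
  norm_num [millsNum, millsDen] at h
  linarith [phi_pos (-3)]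

/-- The reverse hazard rate of the standard normal distribution is bounded by `3.284` on
`[-3, 0)`. -/
theorem stmt_12 (x : ℝ) (hx : x ∈ Set.Ico (-3 : ℝ) 0) : phi x / Phi x ≤ 3.284 := by
  have hmono := phi_sub_le_mul_Phi_sub (c := 3.284) (by norm_num) hx.1
  rw [div_le_iff₀ (Phi_pos x)]
  linarith [phi_neg_three_le_mul_Phi]

end Stmt12
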